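/- arXiv:0809.1595 — 3 statements merged into one kernel-verified Lean document; each statement's English description precedes it below -/
import Mathlib

section
/- Let 0 → L → M → N → 0 be a short exact sequence of R-modules. If M and N are (FP)_{n+1}, then L is (FP)_n. -/
open CategoryTheory Opposite TensorProduct

universe u

namespace AB

/-- `M` is `(FP)ₙ`: there is an exact sequence `Fₙ → ⋯ → F₀ → M → 0`
with each `Fᵢ` finitely generated free.  Equivalently (the form used here),
`(FP)₀` means finitely generated, and `M` is `(FP)_{n+1}` iff there is a
surjection from a finitely generated free module whose kernel is `(FP)ₙ`. -/
def IsFP (R : Type u) [CommRing R] : ℕ → ModuleCat.{u} R → Prop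
  | 0, M => Module.Finite R M
  | n + 1, M => ∃ (k : ℕ) (f : (Fin k → R) →ₗ[R] M), Function.Surjective f ∧
      IsFP R n (ModuleCat.of R (LinearMap.ker f))

/-- `M` is `(FP)_∞`. -/
def IsFPInf (R : Type u) [CommRing R] (M : ModuleCat.{u} R) : Prop := ∀ n, IsFP R n M

/-- `Ext^i_R(M, N)` as a type. -/
noncomputable abbrev ext (R : Type u) [CommRing R] (M N : ModuleCat.{u} R) (i : ℕ) :=
  ((Ext R (ModuleCat.{u} R) i).obj (op M)).obj N

/-- `Ext^i_R(M, N) = 0`. -/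
def extZero (R : Type u) [CommRing R] (M N : ModuleCat.{u} R) (i : ℕ) : Prop :=
  Subsingleton (ext R M N i)

/-- membership in the G-class `G(R)`. -/
def MemG (R : Type u) [CommRing R] (M : ModuleCat.{u} R) : Prop :=
  Module.Finite R M ∧ Module.IsReflexive R M ∧
    (∀ i > 0, extZero R M (ModuleCat.of R R) i) ∧
    (∀ i > 0, extZero R (ModuleCat.of R (Module.Dual R M)) (ModuleCat.of R R) i)

/-- membership in the restricted G-class `G̃(R)`. -/
def MemGtilde (R : Type u) [CommRing R] (M : ModuleCat.{u} R) : Prop :=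
  MemG R M ∧ IsFPInf R M ∧ IsFPInf R (ModuleCat.of R (Module.Dual R M))

/-- `Gdim_R M ≤ n`. -/
def GDimLe (R : Type u) [CommRing R] : ℕ → ModuleCat.{u} R → Prop
  | 0, M => MemG R M
  | n + 1, M => ∃ (G : ModuleCat.{u} R) (f : G →ₗ[R] M), MemG R G ∧ Function.Surjective f ∧
      GDimLe R n (ModuleCat.of R (LinearMap.ker f))

/-- `G̃dim_R M ≤ n`. -/
def GtildeDimLe (R : Type u) [CommRing R] : ℕ → ModuleCat.{u} R → Prop
  | 0, M => MemGtilde R M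
  | n + 1, M => ∃ (G : ModuleCat.{u} R) (f : G →ₗ[R] M), MemGtilde R G ∧ Function.Surjective f ∧
      GtildeDimLe R n (ModuleCat.of R (LinearMap.ker f))

/-- `pd_R M ≤ n`. -/
def ProjDimLe (R : Type u) [CommRing R] : ℕ → ModuleCat.{u} R → Prop
  | 0, M => Module.Projective R M
  | n + 1, M => ∃ (P : ModuleCat.{u} R) (f : P →ₗ[R] M), Module.Projective R P ∧
      Function.Surjective f ∧ ProjDimLe R n (ModuleCat.of R (LinearMap.ker f))

/-- The G-dimension of `M`, as an element of `ℕ∞` (`⊤` meaning `Gdim` is infinite/undefined). -/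
noncomputable def GDim (R : Type u) [CommRing R] (M : ModuleCat.{u} R) : ℕ∞ :=
  sInf {n : ℕ∞ | ∃ m : ℕ, n = m ∧ GDimLe R m M}

/-- The restricted G-dimension of `M`, as an element of `ℕ∞`. -/
noncomputable def GtildeDim (R : Type u) [CommRing R] (M : ModuleCat.{u} R) : ℕ∞ :=
  sInf {n : ℕ∞ | ∃ m : ℕ, n = m ∧ GtildeDimLe R m M}

/-- The projective dimension of `M`, as an element of `ℕ∞`. -/
noncomputable def ProjDim (R : Type u) [CommRing R] (M : ModuleCat.{u} R) : ℕ∞ :=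
  sInf {n : ℕ∞ | ∃ m : ℕ, n = m ∧ ProjDimLe R m M}

/-- The classical depth of `N` with respect to the ideal `I`: the supremum of the
lengths of regular sequences on `N` contained in `I`. -/
noncomputable def cdepth (S : Type u) [CommRing S] (I : Ideal S) (N : Type u)
    [AddCommGroup N] [Module S N] : ℕ∞ :=
  ⨆ rs : {l : List S // (∀ r ∈ l, r ∈ I) ∧ RingTheory.Sequence.IsRegular N l},
    (rs.1.length : ℕ∞)

/-- A bundled faithfully flat (commutative) algebra extension of `R`. -/
structure FFExt (R : Type u) [CommRing R] where
  S : Type u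
  [ring : CommRing S]
  [alg : Algebra R S]
  faithfullyFlat : Module.FaithfullyFlat R S

attribute [instance] FFExt.ring FFExt.alg

/-- The depth of a module `M` over a quasi-local ring `R`: the supremum, over all
faithfully flat extensions `S` of `R`, of the classical depth of `M ⊗_R S` with
respect to `mS`. -/
noncomputable def depth (R : Type u) [CommRing R] [IsLocalRing R] (M : Type u)
    [AddCommGroup M] [Module R M] : ℕ∞ :=
  ⨆ E : FFExt R,
    cdepth E.S (Ideal.map (algebraMap R E.S) (IsLocalRing.maximalIdeal R))
      (TensorProduct R E.S M)

end AB


section Aux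

open LinearMap Function

variable {R : Type u} [CommRing R]

lemma AB.isFP_succ_iff {A : Type u} [AddCommGroup A] [Module R A] {n : ℕ} :
    AB.IsFP R (n + 1) (ModuleCat.of R A) ↔
    ∃ (k : ℕ) (f : (Fin k → R) →ₗ[R] A), Function.Surjective f ∧
      AB.IsFP R n (ModuleCat.of R (LinearMap.ker f)) := by
  constructor
  · rintro ⟨k, f, hf, hker⟩
    exact ⟨k, f, hf, hker⟩
  · rintro ⟨k, f, hf, hker⟩
    exact ⟨k, f, hf, hker⟩

lemma AB.isFP_congr {A B : Type u} [AddCommGroup A] [AddCommGroup B] [Module R A] [Module R B]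
    (n : ℕ) (e : A ≃ₗ[R] B) (hA : AB.IsFP R n (ModuleCat.of R A)) :
    AB.IsFP R n (ModuleCat.of R B) := by
  induction n generalizing A B with
  | zero =>
    have : Module.Finite R A := hA
    exact Module.Finite.equiv e
  | succ n ih =>
    obtain ⟨k, f, hf, hker⟩ := AB.isFP_succ_iff.mp hA
    refine AB.isFP_succ_iff.mpr ⟨k, e.toLinearMap.comp f, e.surjective.comp hf, ?_⟩
    have hk : ker (e.toLinearMap.comp f) = ker f := by
      rw [ker_comp, LinearEquiv.ker, Submodule.comap_bot]
    rw [hk]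
    exact hker

lemma AB.isFP_of_subsingleton (n : ℕ) : ∀ {A : Type u} [AddCommGroup A] [Module R A],
    Subsingleton A → AB.IsFP R n (ModuleCat.of R A) := by
  induction n with
  | zero =>
    intro A _ _ hA
    have : Module.Finite R A :=
      Module.Finite.of_surjective (0 : (Fin 0 → R) →ₗ[R] A) (fun a => ⟨0, Subsingleton.elim _ _⟩)
    exact this
  | succ n ih =>
    intro A _ _ hA
    haveI : Subsingleton A := hA
    refine AB.isFP_succ_iff.mpr ⟨0, 0, fun a => ⟨0, Subsingleton.elim _ _⟩, ?_⟩
    exact ih inferInstance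

lemma AB.isFP_pi (k : ℕ) (n : ℕ) : AB.IsFP R n (ModuleCat.of R (Fin k → R)) := by
  cases n with
  | zero => exact inferInstanceAs (Module.Finite R (Fin k → R))
  | succ n =>
    refine AB.isFP_succ_iff.mpr ⟨k, LinearMap.id, Function.surjective_id, ?_⟩
    refine AB.isFP_of_subsingleton n ?_
    rw [LinearMap.ker_id]
    infer_instance

lemma AB.isFP_mono (n : ℕ) : ∀ {A : Type u} [AddCommGroup A] [Module R A],
    AB.IsFP R (n + 1) (ModuleCat.of R A) → AB.IsFP R n (ModuleCat.of R A) := by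
  induction n with
  | zero =>
    intro A _ _ hA
    obtain ⟨k, f, hf, -⟩ := AB.isFP_succ_iff.mp hA
    exact Module.Finite.of_surjective f hf
  | succ n ih =>
    intro A _ _ hA
    obtain ⟨k, f, hf, h⟩ := AB.isFP_succ_iff.mp hA
    exact AB.isFP_succ_iff.mpr ⟨k, f, hf, ih h⟩

/-- Extension lemma: in a SES `0 → A → B → C → 0`, if `A` and `C` are `(FP)ₙ`, so is `B`. -/
lemma AB.isFP_ext (n : ℕ) :
    ∀ {A B C : Type u} [AddCommGroup A] [AddCommGroup B] [AddCommGroup C]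
      [Module R A] [Module R B] [Module R C]
      (i : A →ₗ[R] B) (p : B →ₗ[R] C), Function.Injective i → Function.Surjective p →
      range i = ker p →
      AB.IsFP R n (ModuleCat.of R A) → AB.IsFP R n (ModuleCat.of R C) →
      AB.IsFP R n (ModuleCat.of R B) := by
  induction n with
  | zero =>
    intro A B C _ _ _ _ _ _ i p hi hp hip hA hC
    have hA : Module.Finite R A := hA
    have hC : Module.Finite R C := hC
    have h1 : (Submodule.map p ⊤).FG := by
      rw [Submodule.map_top, range_eq_top.2 hp]
      exact Module.finite_def.mp hC
    have h2 : ((⊤ : Submodule R B) ⊓ ker p).FG := by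
      rw [top_inf_eq, ← hip, ← Submodule.map_top]
      exact (Module.finite_def.mp hA).map i
    exact Module.finite_def.mpr (Submodule.fg_of_fg_map_of_fg_inf_ker p h1 h2)
  | succ n ih =>
    intro A B C _ _ _ _ _ _ i p hi hp hip hA hC
    obtain ⟨s, a, ha, hka⟩ := AB.isFP_succ_iff.mp hA
    obtain ⟨t, c, hc, hkc⟩ := AB.isFP_succ_iff.mp hC
    obtain ⟨c', hc'⟩ := Module.projective_lifting_property p c hp
    have hpc' : ∀ y, p (c' y) = c y := fun y => DFunLike.congr_fun hc' y
    set β : ((Fin s → R) × (Fin t → R)) →ₗ[R] B :=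
      (i.comp (a.comp (LinearMap.fst R _ _))) + (c'.comp (LinearMap.snd R _ _)) with hβdef
    have hβapp : ∀ (x : Fin s → R) (y : Fin t → R), β (x, y) = i (a x) + c' y := fun _ _ => rfl
    have hpia : ∀ x : Fin s → R, p (i (a x)) = 0 := by
      intro x
      have : i (a x) ∈ ker p := hip ▸ LinearMap.mem_range_self i (a x)
      exact this
    have hβ : Function.Surjective β := by
      intro b
      obtain ⟨y, hy⟩ := hc (p b)
      have hmem : b - c' y ∈ range i := by
        rw [hip, LinearMap.mem_ker, map_sub, hpc', hy, sub_self]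
      obtain ⟨a0, ha0⟩ := hmem
      obtain ⟨x, hx⟩ := ha a0
      refine ⟨(x, y), ?_⟩
      rw [hβapp, hx, ha0]
      abel
    let E : (Fin (s + t) → R) ≃ₗ[R] ((Fin s → R) × (Fin t → R)) :=
      (LinearEquiv.funCongrLeft R R finSumFinEquiv).trans
        (LinearEquiv.sumArrowLequivProdArrow _ _ R R)
    refine AB.isFP_succ_iff.mpr ⟨s + t, β.comp E.toLinearMap, hβ.comp E.surjective, ?_⟩
    -- kernel of β is FP_n via the induced SES  0 → ker a → ker β → ker c → 0
    have hkerβ : AB.IsFP R n (ModuleCat.of R (ker β)) := by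
      have hjmem : ∀ x ∈ ker a, (LinearMap.inl R (Fin s → R) (Fin t → R)) x ∈ ker β := by
        intro x hx
        rw [LinearMap.mem_ker]
        have h1 : β ((LinearMap.inl R (Fin s → R) (Fin t → R)) x) = i (a x) + c' 0 := rfl
        rw [h1, show a x = 0 from hx, map_zero, map_zero, add_zero]
      have hqmem : ∀ z ∈ ker β, (LinearMap.snd R (Fin s → R) (Fin t → R)) z ∈ ker c := by
        rintro ⟨x, y⟩ hz
        have h2 : i (a x) + c' y = 0 := hz
        rw [LinearMap.mem_ker]
        show c y = 0
        have h3 : p (i (a x) + c' y) = 0 := by rw [h2, map_zero]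
        rw [map_add, hpia, hpc', zero_add] at h3
        exact h3
      set j : (ker a : Type u) →ₗ[R] (ker β : Type u) :=
        (LinearMap.inl R (Fin s → R) (Fin t → R)).restrict hjmem with hjdef
      set q : (ker β : Type u) →ₗ[R] (ker c : Type u) :=
        (LinearMap.snd R (Fin s → R) (Fin t → R)).restrict hqmem with hqdef
      have hjinj : Function.Injective j := by
        intro x y hxy
        have h1 : (((x : Fin s → R), (0 : Fin t → R)) : (Fin s → R) × (Fin t → R))
            = ((y : Fin s → R), (0 : Fin t → R)) := Subtype.ext_iff.mp hxy
        exact Subtype.ext (Prod.ext_iff.mp h1).1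
      have hqsurj : Function.Surjective q := by
        rintro ⟨y, hy⟩
        have hcy : c' y ∈ range i := by
          rw [hip, LinearMap.mem_ker, hpc']
          exact hy
        obtain ⟨a0, ha0⟩ := hcy
        obtain ⟨x, hx⟩ := ha a0
        have hmem : ((-x, y) : (Fin s → R) × (Fin t → R)) ∈ ker β := by
          rw [LinearMap.mem_ker, hβapp, map_neg, hx, map_neg, ha0]
          abel
        exact ⟨⟨(-x, y), hmem⟩, Subtype.ext rfl⟩
      have hexact : range j = ker q := by
        ext z
        obtain ⟨⟨x, y⟩, hz⟩ := z
        simp only [LinearMap.mem_range, LinearMap.mem_ker]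
        constructor
        · rintro ⟨⟨w, hw⟩, hwz⟩
          have h1 : (((w : Fin s → R), (0 : Fin t → R)) : (Fin s → R) × (Fin t → R))
              = (x, y) := Subtype.ext_iff.mp hwz
          apply Subtype.ext
          show y = 0
          exact ((Prod.ext_iff.mp h1).2).symm
        · intro hq0
          have hy0 : y = 0 := Subtype.ext_iff.mp hq0
          subst hy0
          have hβ0 : i (a x) + c' 0 = 0 := hz
          rw [map_zero, add_zero] at hβ0
          have hax : a x = 0 := by
            apply hi
            rw [hβ0, map_zero]
          exact ⟨⟨x, hax⟩, Subtype.ext rfl⟩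
      exact ih j q hjinj hqsurj hexact hka hkc
    -- transport along E
    have heq : Submodule.map E.symm.toLinearMap (ker β) = ker (β.comp E.toLinearMap) := by
      ext x
      simp only [Submodule.mem_map, LinearMap.mem_ker]
      constructor
      · rintro ⟨y, hy, rfl⟩
        rw [LinearMap.comp_apply]
        show β (E (E.symm y)) = 0
        rw [LinearEquiv.apply_symm_apply]
        exact hy
      · intro hx
        exact ⟨E x, hx, by simp⟩
    have e2 : (ker β : Type u) ≃ₗ[R] (ker (β.comp E.toLinearMap) : Type u) :=
      (E.symm.submoduleMap (ker β)).trans (LinearEquiv.ofEq _ _ heq)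
    exact AB.isFP_congr n e2 hkerβ

/-- If `0 → A → B → Rᵐ → 0` is exact with free f.g. quotient, and `B` is `(FP)ₙ`,
then `A` is `(FP)ₙ`. -/
lemma AB.isFP_sub_of_free_quot (n : ℕ) {A B : Type u}
    [AddCommGroup A] [AddCommGroup B] [Module R A] [Module R B] {m : ℕ}
    (i : A →ₗ[R] B) (π : B →ₗ[R] (Fin m → R))
    (hi : Function.Injective i) (hπ : Function.Surjective π) (hiπ : range i = ker π)
    (hB : AB.IsFP R n (ModuleCat.of R B)) : AB.IsFP R n (ModuleCat.of R A) := by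
  obtain ⟨s, hs⟩ := Module.projective_lifting_property π LinearMap.id hπ
  have hsec : ∀ y, π (s y) = y := by
    intro y
    rw [← LinearMap.comp_apply, hs, LinearMap.id_apply]
  have hπi : ∀ x : A, π (i x) = 0 := by
    intro x
    have : i x ∈ ker π := hiπ ▸ LinearMap.mem_range_self i x
    exact this
  have hproof : ∀ b : B, ((LinearMap.id : B →ₗ[R] B) - s.comp π) b ∈ range i := by
    intro b
    rw [hiπ, LinearMap.mem_ker]
    show π (b - s (π b)) = 0
    rw [map_sub, hsec, sub_self]
  set r : B →ₗ[R] A :=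
    (LinearEquiv.ofInjective i hi).symm.toLinearMap.comp
      (LinearMap.codRestrict (range i) ((LinearMap.id : B →ₗ[R] B) - s.comp π) hproof) with hrdef
  have hir : ∀ b : B, i (r b) = b - s (π b) := by
    intro b
    have h1 : r b = (LinearEquiv.ofInjective i hi).symm
        ((LinearMap.codRestrict (range i) ((LinearMap.id : B →ₗ[R] B) - s.comp π) hproof) b) := rfl
    rw [h1, LinearEquiv.ofInjective_symm_apply]
    rfl
  have hrsurj : Function.Surjective r := by
    intro x
    refine ⟨i x, hi ?_⟩
    rw [hir, hπi, map_zero, sub_zero]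
  have hrs : ∀ y, r (s y) = 0 := by
    intro y
    apply hi
    rw [hir, hsec, sub_self, map_zero]
  cases n with
  | zero =>
    have : Module.Finite R B := hB
    exact Module.Finite.of_surjective r hrsurj
  | succ n =>
    obtain ⟨k, f, hf, hker⟩ := AB.isFP_succ_iff.mp hB
    refine AB.isFP_succ_iff.mpr ⟨k, r.comp f, hrsurj.comp hf, ?_⟩
    have hle : ker f ≤ ker (r.comp f) := by
      intro x hx
      rw [LinearMap.mem_ker] at hx ⊢
      rw [LinearMap.comp_apply, hx, map_zero]
    set ι : (ker f : Type u) →ₗ[R] (ker (r.comp f) : Type u) :=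
      Submodule.inclusion hle with hιdef
    set τ : (ker (r.comp f) : Type u) →ₗ[R] (Fin m → R) :=
      (π.comp f).comp (ker (r.comp f)).subtype with hτdef
    have hιinj : Function.Injective ι := Submodule.inclusion_injective hle
    have hτsurj : Function.Surjective τ := by
      intro y
      obtain ⟨x, hx⟩ := hf (s y)
      have hmem : x ∈ ker (r.comp f) := by
        rw [LinearMap.mem_ker, LinearMap.comp_apply, hx]
        exact hrs y
      refine ⟨⟨x, hmem⟩, ?_⟩
      show π (f x) = y
      rw [hx, hsec]
    have hexact : range ι = ker τ := by
      ext z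
      obtain ⟨x, hx⟩ := z
      simp only [LinearMap.mem_range, LinearMap.mem_ker]
      constructor
      · rintro ⟨⟨w, hw⟩, hwz⟩
        have hwx : w = x := Subtype.ext_iff.mp hwz
        subst hwx
        show π (f w) = 0
        rw [show f w = 0 from hw, map_zero]
      · intro hτ0
        have hπ0 : π (f x) = 0 := hτ0
        have hr0 : r (f x) = 0 := hx
        have hfx : f x = 0 := by
          have h1 := hir (f x)
          rw [hr0, map_zero, hπ0, map_zero, sub_zero] at h1
          exact h1.symm
        exact ⟨⟨x, hfx⟩, Subtype.ext rfl⟩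
    exact AB.isFP_ext n ι τ hιinj hτsurj hexact hker (AB.isFP_pi m n)

/-- If `M` is `(FP)_{n+1}` then the kernel of any surjection `Rᵏ → M` is `(FP)ₙ`. -/
lemma AB.isFP_ker (n : ℕ) {M : Type u} [AddCommGroup M] [Module R M] {k : ℕ}
    (h : (Fin k → R) →ₗ[R] M) (hh : Function.Surjective h)
    (hM : AB.IsFP R (n + 1) (ModuleCat.of R M)) :
    AB.IsFP R n (ModuleCat.of R (ker h)) := by
  obtain ⟨a, p, hp, hkp⟩ := AB.isFP_succ_iff.mp hM
  set δ : ((Fin k → R) × (Fin a → R)) →ₗ[R] M :=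
    (h.comp (LinearMap.fst R _ _)) - (p.comp (LinearMap.snd R _ _)) with hδdef
  have hδapp : ∀ (x : Fin k → R) (y : Fin a → R), δ (x, y) = h x - p y := fun _ _ => rfl
  set P := ker δ with hPdef
  -- SES 0 → ker p → P → Rᵏ → 0 shows P is FP_n
  have h1mem : ∀ y ∈ ker p, (LinearMap.inr R (Fin k → R) (Fin a → R)) y ∈ P := by
    intro y hy
    rw [LinearMap.mem_ker]
    have h1 : δ ((LinearMap.inr R (Fin k → R) (Fin a → R)) y) = h 0 - p y := rfl
    rw [h1, map_zero, show p y = 0 from hy, sub_zero]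
  set i1 : (ker p : Type u) →ₗ[R] (P : Type u) :=
    (LinearMap.inr R (Fin k → R) (Fin a → R)).restrict h1mem with hi1def
  set π1 : (P : Type u) →ₗ[R] (Fin k → R) :=
    (LinearMap.fst R (Fin k → R) (Fin a → R)).comp P.subtype with hπ1def
  have hi1inj : Function.Injective i1 := by
    intro x y hxy
    have h1 : (((0 : Fin k → R), (x : Fin a → R)) : (Fin k → R) × (Fin a → R))
        = (0, (y : Fin a → R)) := Subtype.ext_iff.mp hxy
    exact Subtype.ext (Prod.ext_iff.mp h1).2
  have hπ1surj : Function.Surjective π1 := by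
    intro x
    obtain ⟨y, hy⟩ := hp (h x)
    have hmem : (x, y) ∈ P := by
      rw [hPdef, LinearMap.mem_ker, hδapp, hy, sub_self]
    exact ⟨⟨(x, y), hmem⟩, rfl⟩
  have hexact1 : range i1 = ker π1 := by
    ext z
    obtain ⟨⟨x, y⟩, hz⟩ := z
    simp only [LinearMap.mem_range, LinearMap.mem_ker]
    constructor
    · rintro ⟨⟨w, hw⟩, hwz⟩
      have h1 : (((0 : Fin k → R), (w : Fin a → R)) : (Fin k → R) × (Fin a → R))
          = (x, y) := Subtype.ext_iff.mp hwz
      show x = 0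
      exact ((Prod.ext_iff.mp h1).1).symm
    · intro hx0
      have hx : x = 0 := hx0
      subst hx
      have h2 : h 0 - p y = 0 := hz
      rw [map_zero, zero_sub, neg_eq_zero] at h2
      exact ⟨⟨y, h2⟩, Subtype.ext rfl⟩
  have hP : AB.IsFP R n (ModuleCat.of R P) :=
    AB.isFP_ext n i1 π1 hi1inj hπ1surj hexact1 hkp (AB.isFP_pi k n)
  -- SES 0 → ker h → P → Rᵃ → 0 concludes
  have h2mem : ∀ x ∈ ker h, (LinearMap.inl R (Fin k → R) (Fin a → R)) x ∈ P := by
    intro x hx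
    rw [LinearMap.mem_ker]
    have h1 : δ ((LinearMap.inl R (Fin k → R) (Fin a → R)) x) = h x - p 0 := rfl
    rw [h1, map_zero, show h x = 0 from hx, sub_zero]
  set i2 : (ker h : Type u) →ₗ[R] (P : Type u) :=
    (LinearMap.inl R (Fin k → R) (Fin a → R)).restrict h2mem with hi2def
  set π2 : (P : Type u) →ₗ[R] (Fin a → R) :=
    (LinearMap.snd R (Fin k → R) (Fin a → R)).comp P.subtype with hπ2def
  have hi2inj : Function.Injective i2 := by
    intro x y hxy
    have h1 : (((x : Fin k → R), (0 : Fin a → R)) : (Fin k → R) × (Fin a → R))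
        = ((y : Fin k → R), 0) := Subtype.ext_iff.mp hxy
    exact Subtype.ext (Prod.ext_iff.mp h1).1
  have hπ2surj : Function.Surjective π2 := by
    intro y
    obtain ⟨x, hx⟩ := hh (p y)
    have hmem : (x, y) ∈ P := by
      rw [hPdef, LinearMap.mem_ker, hδapp, hx, sub_self]
    exact ⟨⟨(x, y), hmem⟩, rfl⟩
  have hexact2 : range i2 = ker π2 := by
    ext z
    obtain ⟨⟨x, y⟩, hz⟩ := z
    simp only [LinearMap.mem_range, LinearMap.mem_ker]
    constructor
    · rintro ⟨⟨w, hw⟩, hwz⟩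
      have h1 : (((w : Fin k → R), (0 : Fin a → R)) : (Fin k → R) × (Fin a → R))
          = (x, y) := Subtype.ext_iff.mp hwz
      show y = 0
      exact ((Prod.ext_iff.mp h1).2).symm
    · intro hy0
      have hy : y = 0 := hy0
      subst hy
      have h2 : h x - p 0 = 0 := hz
      rw [map_zero, sub_zero] at h2
      exact ⟨⟨x, h2⟩, Subtype.ext rfl⟩
  exact AB.isFP_sub_of_free_quot n i2 π2 hi2inj hπ2surj hexact2 hP

end Aux

theorem fp_of_ses_kernel (R : Type u) [CommRing R] (L M N : Type u)
    [AddCommGroup L] [AddCommGroup M] [AddCommGroup N]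
    [Module R L] [Module R M] [Module R N]
    (f : L →ₗ[R] M) (g : M →ₗ[R] N)
    (hf : Function.Injective f) (hg : Function.Surjective g)
    (hfg : LinearMap.range f = LinearMap.ker g) (n : ℕ)
    (hM : AB.IsFP R (n + 1) (ModuleCat.of R M)) (hN : AB.IsFP R (n + 1) (ModuleCat.of R N)) :
    AB.IsFP R n (ModuleCat.of R L) := by
  classical
  -- reduce to `ker g`
  have e : L ≃ₗ[R] (LinearMap.ker g : Type u) :=
    (LinearEquiv.ofInjective f hf).trans (LinearEquiv.ofEq _ _ hfg)
  refine AB.isFP_congr n e.symm ?_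
  obtain ⟨k, h, hh, hker⟩ := AB.isFP_succ_iff.mp hM
  cases n with
  | zero =>
    -- ker g = map h (ker (g ∘ h)), which is f.g.
    have hK : AB.IsFP R 0 (ModuleCat.of R (LinearMap.ker (g.comp h))) :=
      AB.isFP_ker 0 (g.comp h) (hg.comp hh) hN
    have hKfin : Module.Finite R (LinearMap.ker (g.comp h) : Type u) := hK
    have hmap : Submodule.map h (LinearMap.ker (g.comp h)) = LinearMap.ker g := by
      ext z
      simp only [Submodule.mem_map, LinearMap.mem_ker, LinearMap.comp_apply]
      constructor
      · rintro ⟨x, hx, rfl⟩; exact hx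
      · intro hz
        obtain ⟨x, rfl⟩ := hh z
        exact ⟨x, hz, rfl⟩
    have hfg2 : (LinearMap.ker g).FG := by
      rw [← hmap]
      exact (Module.Finite.iff_fg.mp hKfin).map h
    exact Module.Finite.iff_fg.mpr hfg2
  | succ n =>
    -- K := ker (g ∘ h) is FP_{n+1}; surject Rᵃ → K → ker g, with FP_n kernel
    have hK : AB.IsFP R (n + 1) (ModuleCat.of R (LinearMap.ker (g.comp h))) :=
      AB.isFP_ker (n + 1) (g.comp h) (hg.comp hh) hN
    obtain ⟨a, q, hq, hkq⟩ := AB.isFP_succ_iff.mp hK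
    have hmem : ∀ x ∈ LinearMap.ker (g.comp h), h x ∈ LinearMap.ker g := fun x hx => hx
    set ρ : (LinearMap.ker (g.comp h) : Type u) →ₗ[R] (LinearMap.ker g : Type u) :=
      h.restrict hmem with hρdef
    set π : (Fin a → R) →ₗ[R] (LinearMap.ker g : Type u) := ρ.comp q with hπdef
    have hπapp : ∀ w : Fin a → R, π w = ρ (q w) := fun _ => rfl
    have hπsurj : Function.Surjective π := by
      rintro ⟨z, hz⟩
      obtain ⟨x, rfl⟩ := hh z
      have hx : x ∈ LinearMap.ker (g.comp h) := hz
      obtain ⟨w, hw⟩ := hq ⟨x, hx⟩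
      refine ⟨w, ?_⟩
      rw [hπapp, hw]
      exact Subtype.ext rfl
    refine AB.isFP_succ_iff.mpr ⟨a, π, hπsurj, ?_⟩
    -- SES 0 → ker q → ker π → ker h → 0
    have hle : LinearMap.ker q ≤ LinearMap.ker π := by
      intro w hw
      rw [LinearMap.mem_ker] at hw ⊢
      rw [hπapp, hw, map_zero]
    set ι : (LinearMap.ker q : Type u) →ₗ[R] (LinearMap.ker π : Type u) :=
      Submodule.inclusion hle with hιdef
    have hτmem : ∀ w : (LinearMap.ker π : Type u),
        ((LinearMap.ker (g.comp h)).subtype.comp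
          (q.comp (LinearMap.ker π).subtype)) w ∈ LinearMap.ker h := by
      rintro ⟨w, hw⟩
      have h0 : ρ (q w) = 0 := by
        rw [← hπapp]
        exact hw
      show h ((q w : (LinearMap.ker (g.comp h) : Type u)) : Fin k → R) = 0
      exact Subtype.ext_iff.mp h0
    set τ : (LinearMap.ker π : Type u) →ₗ[R] (LinearMap.ker h : Type u) :=
      LinearMap.codRestrict (LinearMap.ker h)
        ((LinearMap.ker (g.comp h)).subtype.comp (q.comp (LinearMap.ker π).subtype))
        hτmem with hτdef
    have hιinj : Function.Injective ι := Submodule.inclusion_injective hle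
    have hτsurj : Function.Surjective τ := by
      rintro ⟨z, hz⟩
      have hz0 : h z = 0 := hz
      have hzK : z ∈ LinearMap.ker (g.comp h) := by
        rw [LinearMap.mem_ker, LinearMap.comp_apply, hz0, map_zero]
      obtain ⟨w, hw⟩ := hq ⟨z, hzK⟩
      have hwπ : w ∈ LinearMap.ker π := by
        rw [LinearMap.mem_ker, hπapp, hw]
        exact Subtype.ext hz0
      refine ⟨⟨w, hwπ⟩, Subtype.ext ?_⟩
      show ((q w : (LinearMap.ker (g.comp h) : Type u)) : Fin k → R) = z
      rw [hw]
    have hexact : LinearMap.range ι = LinearMap.ker τ := by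
      ext z
      obtain ⟨w, hw⟩ := z
      simp only [LinearMap.mem_range, LinearMap.mem_ker]
      constructor
      · rintro ⟨⟨v, hv⟩, hvz⟩
        have hvw : v = w := Subtype.ext_iff.mp hvz
        subst hvw
        apply Subtype.ext
        show ((q v : (LinearMap.ker (g.comp h) : Type u)) : Fin k → R) = 0
        rw [show q v = 0 from hv]
        rfl
      · intro hτ0
        have h1 : ((q w : (LinearMap.ker (g.comp h) : Type u)) : Fin k → R) = 0 :=
          Subtype.ext_iff.mp hτ0
        have h2 : q w = 0 := Subtype.ext h1
        exact ⟨⟨w, h2⟩, Subtype.ext rfl⟩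
    exact AB.isFP_ext n ι τ hιinj hτsurj hexact hkq (AB.isFP_mono n hker)
end

section
/- Let S be a faithfully flat R-algebra and M an R-module. Then M is (FP)_n as an R-module if and only if M ⊗_R S is (FP)_n as an S-module. -/
open CategoryTheory Opposite TensorProduct

universe u

set_option synthInstance.maxHeartbeats 400000
set_option maxHeartbeats 1600000

namespace ABAux

open AB LinearMap TensorProduct

variable {R : Type u} [CommRing R]

/-- kernel of a composition with a linear equivalence. -/
noncomputable def kerCompEquiv {A B C : Type u} [AddCommGroup A] [Module R A]
    [AddCommGroup B] [Module R B] [AddCommGroup C] [Module R C]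
    (e : A ≃ₗ[R] B) (g : B →ₗ[R] C) :
    LinearMap.ker (g ∘ₗ e.toLinearMap) ≃ₗ[R] LinearMap.ker g :=
  LinearEquiv.ofEq _ _ (by rw [LinearMap.ker_comp]) ≪≫ₗ
    (e.ofSubmodule' (LinearMap.ker g))

/-- `IsFP` is invariant under linear isomorphism. -/
lemma isFP_congr : ∀ (n : ℕ) {M N : Type u} [AddCommGroup M] [Module R M]
    [AddCommGroup N] [Module R N] (_ : M ≃ₗ[R] N),
    IsFP R n (ModuleCat.of R M) → IsFP R n (ModuleCat.of R N)
  | 0, M, N, _, _, _, _, e, h => by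
      have : Module.Finite R M := h
      show Module.Finite R N
      exact Module.Finite.equiv e
  | n+1, M, N, _, _, _, _, e, h => by
      obtain ⟨k, f, hf, hker⟩ := h
      refine ⟨k, e.toLinearMap ∘ₗ f, e.surjective.comp hf, ?_⟩
      have hk : LinearMap.ker (e.toLinearMap ∘ₗ f) = LinearMap.ker f := by
        rw [LinearMap.ker_comp, LinearEquiv.ker, Submodule.comap_bot]
      exact isFP_congr n (LinearEquiv.ofEq _ _ hk.symm) hker

/-- kernel of `f.prodMap id` is equivalent to `ker f`. -/
noncomputable def kerProdMapIdEquiv {M F : Type u} [AddCommGroup M] [Module R M]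
    [AddCommGroup F] [Module R F]
    (f : M →ₗ[R] F) (G : Type u) [AddCommGroup G] [Module R G] :
    LinearMap.ker (f.prodMap (LinearMap.id : G →ₗ[R] G)) ≃ₗ[R] LinearMap.ker f where
  toFun x := ⟨x.1.1, by
    have hx := x.2
    simp only [mem_ker, prodMap_apply, Prod.mk_eq_zero] at hx
    exact hx.1⟩
  invFun y := ⟨(y.1, 0), by
    simp only [mem_ker, prodMap_apply, Prod.mk_eq_zero]
    exact ⟨y.2, rfl⟩⟩
  map_add' x y := rfl
  map_smul' r x := rfl
  left_inv x := by
    have hx := x.2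
    simp only [mem_ker, prodMap_apply, Prod.mk_eq_zero, id_coe, id_eq] at hx
    exact Subtype.ext (Prod.ext rfl hx.2.symm)
  right_inv y := rfl

/-- `(FP)ₙ` is preserved under adding a finite free direct summand. -/
lemma isFP_prod_free (n m : ℕ) {M : Type u} [AddCommGroup M] [Module R M]
    (h : IsFP R n (ModuleCat.of R M)) :
    IsFP R n (ModuleCat.of R (M × (Fin m → R))) := by
  match n, h with
  | 0, h =>
    have : Module.Finite R M := h
    show Module.Finite R (M × (Fin m → R))
    infer_instance
  | n+1, h =>
    obtain ⟨k, f, hf, hker⟩ := h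
    let e : (Fin (k+m) → R) ≃ₗ[R] (Fin k → R) × (Fin m → R) :=
      (LinearEquiv.funCongrLeft R R finSumFinEquiv) ≪≫ₗ
        (LinearEquiv.sumArrowLequivProdArrow (Fin k) (Fin m) R R)
    let g := (f.prodMap (LinearMap.id : (Fin m → R) →ₗ[R] (Fin m → R))) ∘ₗ e.toLinearMap
    refine ⟨k+m, g, ?_, ?_⟩
    · exact (hf.prodMap Function.surjective_id).comp e.surjective
    · have e1 := kerCompEquiv e (f.prodMap (LinearMap.id : (Fin m → R) →ₗ[R] (Fin m → R)))
      have e2 := kerProdMapIdEquiv f (Fin m → R)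
      exact isFP_congr n (e1 ≪≫ₗ e2).symm hker

/-- `(FP)ₙ` descends along finite free direct summands. -/
lemma isFP_of_prod_free (n m : ℕ) {M : Type u} [AddCommGroup M] [Module R M]
    (h : IsFP R n (ModuleCat.of R (M × (Fin m → R)))) : IsFP R n (ModuleCat.of R M) := by
  match n, h with
  | 0, h =>
    have : Module.Finite R (M × (Fin m → R)) := h
    show Module.Finite R M
    exact Module.Finite.of_surjective (LinearMap.fst R M (Fin m → R)) Prod.fst_surjective
  | n+1, h =>
    obtain ⟨k, p, hp, hker⟩ := h
    set F := (Fin m → R)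
    let q : (Fin k → R) →ₗ[R] M := (LinearMap.fst R M F) ∘ₗ p
    have hq : Function.Surjective q := Prod.fst_surjective.comp hp
    refine ⟨k, q, hq, ?_⟩
    let ι : LinearMap.ker p →ₗ[R] LinearMap.ker q :=
      Submodule.inclusion (ker_le_ker_comp p (LinearMap.fst R M F))
    let φ : LinearMap.ker q →ₗ[R] F :=
      ((LinearMap.snd R M F) ∘ₗ p) ∘ₗ (LinearMap.ker q).subtype
    have hφ : Function.Surjective φ := by
      intro y
      obtain ⟨x, hx⟩ := hp (0, y)
      have hxq : x ∈ LinearMap.ker q := by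
        show (p x).1 = 0
        exact congrArg Prod.fst hx
      refine ⟨⟨x, hxq⟩, ?_⟩
      show (p x).2 = y
      exact congrArg Prod.snd hx
    have hexact : Function.Exact ι φ := by
      intro x
      constructor
      · intro hx0
        have hx1 : (p x.1).1 = 0 := x.2
        have hx2 : (p x.1).2 = 0 := hx0
        have hxp : x.1 ∈ LinearMap.ker p := by
          simp only [mem_ker]
          exact Prod.ext hx1 hx2
        exact ⟨⟨x.1, hxp⟩, Subtype.ext rfl⟩
      · rintro ⟨y, rfl⟩
        have : p y.1 = 0 := y.2
        simp [φ, ι, Submodule.inclusion, this]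
    have hinj : Function.Injective ι := Submodule.inclusion_injective _
    let l := LinearMap.splittingOfFunOnFintypeSurjective φ hφ
    have hl : φ ∘ₗ l = LinearMap.id := LinearMap.splittingOfFunOnFintypeSurjective_splits φ hφ
    let e := (hexact.splitSurjectiveEquiv hinj ⟨l, hl⟩).1
    exact isFP_congr n e.symm (isFP_prod_free n m hker)

/-- Schanuel-type lemma: if `M` is `(FP)_{n+1}` then the kernel of *any* surjection
from a finite free module onto `M` is `(FP)_n`. -/
lemma isFP_ker_of_surjective (n k : ℕ) {M : Type u} [AddCommGroup M] [Module R M]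
    (hM : IsFP R (n+1) (ModuleCat.of R M)) (f : (Fin k → R) →ₗ[R] M)
    (hf : Function.Surjective f) : IsFP R n (ModuleCat.of R (LinearMap.ker f)) := by
  obtain ⟨j, g0, hg, hker⟩ := hM
  let g : (Fin j → R) →ₗ[R] M := g0
  have hg : Function.Surjective g := hg
  have hker : IsFP R n (ModuleCat.of R (LinearMap.ker g)) := hker
  let h : ((Fin j → R) × (Fin k → R)) →ₗ[R] M :=
    g ∘ₗ LinearMap.fst R _ _ - f ∘ₗ LinearMap.snd R _ _
  have hmem : ∀ x : (Fin j → R) × (Fin k → R), x ∈ LinearMap.ker h ↔ g x.1 = f x.2 := by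
    intro x
    rw [LinearMap.mem_ker]
    exact sub_eq_zero (a := g x.1) (b := f x.2)
  -- first splitting : ker h ≃ ker g × (Fin k → R)
  let ι₁ : (LinearMap.ker g) →ₗ[R] LinearMap.ker h :=
    ((LinearMap.inl R (Fin j → R) (Fin k → R)) ∘ₗ (LinearMap.ker g).subtype).codRestrict _
      (fun a => by
        rw [hmem]
        show g a.1 = f 0
        rw [a.2, map_zero])
  let π₂ : LinearMap.ker h →ₗ[R] (Fin k → R) :=
    (LinearMap.snd R (Fin j → R) (Fin k → R)) ∘ₗ (LinearMap.ker h).subtype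
  have hπ₂ : Function.Surjective π₂ := by
    intro b
    obtain ⟨a, ha⟩ := hg (f b)
    exact ⟨⟨(a, b), (hmem _).mpr ha⟩, rfl⟩
  have hinj₁ : Function.Injective ι₁ := by
    intro a b hab
    exact Subtype.ext (congrArg Prod.fst (congrArg Subtype.val hab))
  have hexact₁ : Function.Exact ι₁ π₂ := by
    intro x
    constructor
    · intro hx0
      have hx2 : x.1.2 = 0 := hx0
      have hg1 : x.1.1 ∈ LinearMap.ker g := by
        rw [mem_ker]
        have := (hmem x.1).mp x.2
        rw [hx2, map_zero] at this
        exact this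
      exact ⟨⟨x.1.1, hg1⟩, Subtype.ext (Prod.ext rfl hx2.symm)⟩
    · rintro ⟨y, rfl⟩
      rfl
  let l₁ := LinearMap.splittingOfFunOnFintypeSurjective π₂ hπ₂
  have hl₁ : π₂ ∘ₗ l₁ = LinearMap.id := LinearMap.splittingOfFunOnFintypeSurjective_splits π₂ hπ₂
  let e₁ := (hexact₁.splitSurjectiveEquiv hinj₁ ⟨l₁, hl₁⟩).1
  have hX : IsFP R n (ModuleCat.of R (LinearMap.ker h)) :=
    isFP_congr n e₁.symm (isFP_prod_free n k hker)
  -- second splitting : ker h ≃ ker f × (Fin j → R)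
  let ι₂ : (LinearMap.ker f) →ₗ[R] LinearMap.ker h :=
    ((LinearMap.inr R (Fin j → R) (Fin k → R)) ∘ₗ (LinearMap.ker f).subtype).codRestrict _
      (fun b => by
        rw [hmem]
        show g 0 = f b.1
        rw [b.2, map_zero])
  let π₁ : LinearMap.ker h →ₗ[R] (Fin j → R) :=
    (LinearMap.fst R (Fin j → R) (Fin k → R)) ∘ₗ (LinearMap.ker h).subtype
  have hπ₁ : Function.Surjective π₁ := by
    intro a
    obtain ⟨b, hb⟩ := hf (g a)
    exact ⟨⟨(a, b), (hmem _).mpr hb.symm⟩, rfl⟩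
  have hinj₂ : Function.Injective ι₂ := by
    intro a b hab
    exact Subtype.ext (congrArg Prod.snd (congrArg Subtype.val hab))
  have hexact₂ : Function.Exact ι₂ π₁ := by
    intro x
    constructor
    · intro hx0
      have hx1 : x.1.1 = 0 := hx0
      have hf2 : x.1.2 ∈ LinearMap.ker f := by
        rw [mem_ker]
        have := (hmem x.1).mp x.2
        rw [hx1, map_zero] at this
        exact this.symm
      exact ⟨⟨x.1.2, hf2⟩, Subtype.ext (Prod.ext hx1.symm rfl)⟩
    · rintro ⟨y, rfl⟩
      rfl
  let l₂ := LinearMap.splittingOfFunOnFintypeSurjective π₁ hπ₁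
  have hl₂ : π₁ ∘ₗ l₂ = LinearMap.id := LinearMap.splittingOfFunOnFintypeSurjective_splits π₁ hπ₁
  let e₂ := (hexact₂.splitSurjectiveEquiv hinj₂ ⟨l₂, hl₂⟩).1
  exact isFP_of_prod_free n j (isFP_congr n e₂ hX)

lemma isFP_finite (n : ℕ) {M : Type u} [AddCommGroup M] [Module R M]
    (h : IsFP R n (ModuleCat.of R M)) : Module.Finite R M := by
  match n, h with
  | 0, h => exact h
  | n+1, h =>
    obtain ⟨k, f, hf, -⟩ := h
    exact Module.Finite.of_surjective f hf

variable {S : Type u} [CommRing S] [Algebra R S]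

/-- faithfully flat descent of module finiteness. -/
lemma finite_descent [Module.FaithfullyFlat R S] {M : Type u} [AddCommGroup M] [Module R M]
    (h : Module.Finite S (S ⊗[R] M)) : Module.Finite R M := by
  classical
  obtain ⟨T, hT⟩ := h.fg_top
  choose rep hrep using fun t : S ⊗[R] M => TensorProduct.exists_finset t
  let N : Submodule R M := Submodule.span R (⋃ t ∈ T, ((rep t).image Prod.snd : Finset M))
  have hNfg : N.FG := by
    refine ⟨T.biUnion fun t => (rep t).image Prod.snd, ?_⟩
    simp [N, Finset.coe_biUnion]
  have hrange : LinearMap.range (N.subtype.baseChange S) = ⊤ := by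
    rw [eq_top_iff, ← hT, Submodule.span_le]
    intro t ht
    rw [SetLike.mem_coe, hrep t]
    refine Submodule.sum_mem _ fun c hc => ?_
    have hmem : c.2 ∈ N := Submodule.subset_span (by
      simp only [Set.mem_iUnion, Finset.coe_image, Set.mem_image, Finset.mem_coe]
      exact ⟨t, ht, c, hc, rfl⟩)
    exact ⟨c.1 ⊗ₜ[R] (⟨c.2, hmem⟩ : N), rfl⟩
  have hsub : Subsingleton (S ⊗[R] (M ⧸ N)) := by
    refine subsingleton_of_forall_eq 0 fun x => ?_
    obtain ⟨y, rfl⟩ : ∃ y, (N.mkQ.baseChange S) y = x := by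
      have : Function.Surjective (N.mkQ.baseChange S) := by
        rw [LinearMap.baseChange_eq_ltensor]
        exact LinearMap.lTensor_surjective S N.mkQ_surjective
      exact this x
    obtain ⟨z, rfl⟩ : ∃ z, (N.subtype.baseChange S) z = y := by
      have : y ∈ LinearMap.range (N.subtype.baseChange S) := hrange ▸ Submodule.mem_top
      exact this
    rw [← LinearMap.comp_apply, ← LinearMap.baseChange_comp]
    have : N.mkQ ∘ₗ N.subtype = 0 := by
      ext a
      simp
    rw [this]
    simp
  have : Subsingleton (M ⧸ N) :=
    Module.FaithfullyFlat.lTensor_reflects_triviality R S (M ⧸ N)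
  have hN : N = ⊤ := Submodule.Quotient.subsingleton_iff.mp this
  exact ⟨hN ▸ hNfg⟩

/-- flat base change of the kernel of a surjection. -/
noncomputable def kerBaseChangeEquiv [Module.Flat R S] {M₁ M₂ : Type u}
    [AddCommGroup M₁] [Module R M₁] [AddCommGroup M₂] [Module R M₂] (g : M₁ →ₗ[R] M₂)
    (hg : Function.Surjective g) :
    (S ⊗[R] (LinearMap.ker g)) ≃ₗ[S] LinearMap.ker (g.baseChange S) := by
  have hinj : Function.Injective ((LinearMap.ker g).subtype.baseChange S) := by
    rw [LinearMap.baseChange_eq_ltensor]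
    exact Module.Flat.lTensor_preserves_injective_linearMap _ (Submodule.injective_subtype _)
  have hexact : Function.Exact ((LinearMap.ker g).subtype.baseChange S) (g.baseChange S) :=
    lTensor_exact S g.exact_subtype_ker_map hg
  exact (LinearEquiv.ofInjective _ hinj).trans
    (LinearEquiv.ofEq _ _ (LinearMap.exact_iff.mp hexact).symm)

section main
variable [Module.FaithfullyFlat R S]

lemma isFP_baseChange : ∀ (n : ℕ) (M : Type u) [AddCommGroup M] [Module R M],
    IsFP R n (ModuleCat.of R M) → IsFP S n (ModuleCat.of S (S ⊗[R] M))
  | 0, M, _, _, h => by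
      have : Module.Finite R M := h
      show Module.Finite S (S ⊗[R] M)
      infer_instance
  | n+1, M, _, _, h => by
      obtain ⟨k, f0, hf, hker⟩ := h
      let f : (Fin k → R) →ₗ[R] M := f0
      have hf : Function.Surjective f := hf
      have hker : IsFP R n (ModuleCat.of R (LinearMap.ker f)) := hker
      let e : (Fin k → S) ≃ₗ[S] (S ⊗[R] (Fin k → R)) :=
        (TensorProduct.piScalarRight R S S (Fin k)).symm
      let fS : (Fin k → S) →ₗ[S] S ⊗[R] M := (f.baseChange S) ∘ₗ e.toLinearMap
      have hbc : Function.Surjective (f.baseChange S) := by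
        rw [LinearMap.baseChange_eq_ltensor]
        exact LinearMap.lTensor_surjective S hf
      refine ⟨k, fS, hbc.comp e.surjective, ?_⟩
      have e₁ := kerBaseChangeEquiv (S := S) f hf
      have e₂ := kerCompEquiv e (f.baseChange S)
      exact isFP_congr n (e₁ ≪≫ₗ e₂.symm)
        (isFP_baseChange n (LinearMap.ker f) hker)

lemma isFP_descent : ∀ (n : ℕ) (M : Type u) [AddCommGroup M] [Module R M],
    IsFP S n (ModuleCat.of S (S ⊗[R] M)) → IsFP R n (ModuleCat.of R M)
  | 0, M, _, _, h => by
      have : Module.Finite S (S ⊗[R] M) := h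
      show Module.Finite R M
      exact finite_descent this
  | n+1, M, _, _, h => by
      have hfin : Module.Finite S (S ⊗[R] M) := isFP_finite (n+1) h
      have hMfin : Module.Finite R M := finite_descent hfin
      obtain ⟨k, f, hf⟩ := Module.Finite.exists_fin' R M
      let e : (Fin k → S) ≃ₗ[S] (S ⊗[R] (Fin k → R)) :=
        (TensorProduct.piScalarRight R S S (Fin k)).symm
      let fS : (Fin k → S) →ₗ[S] S ⊗[R] M := (f.baseChange S) ∘ₗ e.toLinearMap
      have hbc : Function.Surjective (f.baseChange S) := by
        rw [LinearMap.baseChange_eq_ltensor]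
        exact LinearMap.lTensor_surjective S hf
      have hfS : Function.Surjective fS := hbc.comp e.surjective
      have hkS : IsFP S n (ModuleCat.of S (LinearMap.ker fS)) :=
        isFP_ker_of_surjective n k h fS hfS
      have e₁ := kerBaseChangeEquiv (S := S) f hf
      have e₂ := kerCompEquiv e (f.baseChange S)
      have : IsFP S n (ModuleCat.of S (S ⊗[R] (LinearMap.ker f))) :=
        isFP_congr n (e₁ ≪≫ₗ e₂.symm).symm hkS
      exact ⟨k, f, hf, isFP_descent n (LinearMap.ker f) this⟩

end main

end ABAux

theorem fp_faithfullyFlat_baseChange (R S : Type u) [CommRing R] [CommRing S] [Algebra R S]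
    (hS : Module.FaithfullyFlat R S) (M : Type u) [AddCommGroup M] [Module R M] (n : ℕ) :
    AB.IsFP R n (ModuleCat.of R M) ↔
      AB.IsFP S n (ModuleCat.of S (TensorProduct R S M)) := by
  haveI := hS
  exact ⟨ABAux.isFP_baseChange n M, ABAux.isFP_descent n M⟩
end

section
/- Let R be a quasi-local ring (commutative with unique maximal ideal, not necessarily Noetherian) with depth R = 0, and let M be a finitely presented R-module. Then M = 0 if and only if Hom_R(M,R) = 0. -/
open CategoryTheory Opposite TensorProduct

universe u

open Polynomial in
private lemma exists_annihilator_ideal (R : Type u) [CommRing R] [IsLocalRing R]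
    (M : Type u) [AddCommGroup M] [Module R M] [Module.FinitePresentation R M]
    (hdual : ∀ f : Module.Dual R M, f = 0) (x : M) (hx : x ≠ 0) :
    ∃ I : Ideal R, I.FG ∧ I ≠ ⊤ ∧ ∀ c : R, (∀ a ∈ I, a * c = 0) → c = 0 := by
  classical
  have hP : ∃ n : ℕ, ∃ v : Fin n → M, Submodule.span R (Set.range v) = ⊤ := by
    obtain ⟨n, v, hv⟩ := Module.Finite.exists_fin (R := R) (M := M)
    exact ⟨n, v, hv⟩
  obtain ⟨v, hv⟩ := Nat.find_spec hP
  have hpos : 0 < Nat.find hP := by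
    rcases Nat.eq_zero_or_pos (Nat.find hP) with h0 | h
    · exfalso
      have hemp : IsEmpty (Fin (Nat.find hP)) := by rw [h0]; infer_instance
      have : Set.range v = ∅ := Set.range_eq_empty v
      rw [this, Submodule.span_empty] at hv
      exact hx (by rw [← Submodule.mem_bot (R := R), hv]; trivial)
    · exact h
  set m := Nat.find hP - 1 with hm
  have hnm : Nat.find hP = m + 1 := by omega
  set w : Fin m → M := fun j => v ⟨j.1 + 1, by omega⟩ with hw
  set N := Submodule.span R (Set.range w) with hN
  set e := v ⟨0, hpos⟩ with he
  have heN : e ∉ N := by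
    intro heN
    refine Nat.find_min hP (show m < Nat.find hP by omega) ⟨w, ?_⟩
    rw [eq_top_iff, ← hv, Submodule.span_le]
    rintro _ ⟨i, rfl⟩
    by_cases hi : i.1 = 0
    · have hvi : v i = e := by rw [he]; congr 1; exact Fin.ext hi
      rw [hvi]; exact heN
    · have hisLt := i.isLt
      have hlt : (i.1 - 1) + 1 < Nat.find hP := by omega
      have hieq : i = ⟨(i.1 - 1) + 1, hlt⟩ := Fin.ext (by simp only [Fin.val_mk]; omega)
      have hlt2 : i.1 - 1 < m := by omega
      refine Submodule.subset_span ⟨⟨i.1 - 1, hlt2⟩, ?_⟩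
      conv_rhs => rw [hieq]
  have hNfg : N.FG := Submodule.fg_span (Set.finite_range w)
  haveI hQfp : Module.FinitePresentation R (M ⧸ N) :=
    Module.finitePresentation_of_surjective N.mkQ N.mkQ_surjective
      (by rw [Submodule.ker_mkQ]; exact hNfg)
  set φ : R →ₗ[R] (M ⧸ N) := LinearMap.toSpanSingleton R (M ⧸ N) (N.mkQ e) with hφ
  have htop : (Submodule.span R {N.mkQ e} : Submodule R (M ⧸ N)) = ⊤ := by
    have h1 : Submodule.map N.mkQ ⊤ = ⊤ := by
      rw [Submodule.map_top, Submodule.range_mkQ]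
    rw [eq_top_iff, ← h1, ← hv, Submodule.map_span, Submodule.span_le]
    rintro _ ⟨_, ⟨i, rfl⟩, rfl⟩
    by_cases hi : i.1 = 0
    · have hvi : v i = e := by rw [he]; congr 1; exact Fin.ext hi
      rw [hvi]; exact Submodule.subset_span rfl
    · have hvN : v i ∈ N := by
        have hieq : i = ⟨(i.1 - 1) + 1, by omega⟩ := Fin.ext (by simp only [Fin.val_mk]; omega)
        refine Submodule.subset_span ⟨⟨i.1 - 1, by omega⟩, ?_⟩
        conv_rhs => rw [hieq]
      have h0 : N.mkQ (v i) = 0 := (Submodule.Quotient.mk_eq_zero N).mpr hvN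
      rw [h0]; exact Submodule.zero_mem _
  have hφsurj : Function.Surjective φ := by
    rw [← LinearMap.range_eq_top, ← LinearMap.span_singleton_eq_range, htop]
  refine ⟨LinearMap.ker φ, Module.FinitePresentation.fg_ker φ hφsurj, ?_, ?_⟩
  · intro hIt
    have h1 : (1 : R) ∈ LinearMap.ker φ := hIt ▸ Submodule.mem_top
    rw [LinearMap.mem_ker, hφ, LinearMap.toSpanSingleton_apply, one_smul] at h1
    exact heN ((Submodule.Quotient.mk_eq_zero N).mp h1)
  · intro c hc
    have hker : LinearMap.ker φ ≤ LinearMap.ker (LinearMap.toSpanSingleton R R c) := by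
      intro a ha
      rw [LinearMap.mem_ker, LinearMap.toSpanSingleton_apply, smul_eq_mul]
      exact hc a ha
    set χ : (R ⧸ LinearMap.ker φ) →ₗ[R] R :=
      Submodule.liftQ (LinearMap.ker φ) (LinearMap.toSpanSingleton R R c) hker with hχ
    set ε := φ.quotKerEquivOfSurjective hφsurj with hε
    set f : Module.Dual R M := (χ.comp ε.symm.toLinearMap).comp N.mkQ with hf
    have hεone : ε (Submodule.Quotient.mk (1 : R)) = N.mkQ e := by
      have h2 : ε (Submodule.Quotient.mk (1 : R)) = φ 1 := by rw [hε]; rfl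
      rw [h2, hφ, LinearMap.toSpanSingleton_apply, one_smul]
    have : f e = c := by
      rw [hf]
      simp only [LinearMap.comp_apply, LinearEquiv.coe_toLinearMap]
      rw [← hεone, LinearEquiv.symm_apply_apply, hχ]
      rw [Submodule.liftQ_apply, LinearMap.toSpanSingleton_apply, one_smul]
    rw [hdual f] at this
    simpa using this.symm

open Polynomial in
private lemma depth_ne_zero_of_ideal (R : Type u) [CommRing R] [IsLocalRing R]
    (I : Ideal R) (hfg : I.FG) (hI : I ≠ ⊤)
    (hann : ∀ c : R, (∀ a ∈ I, a * c = 0) → c = 0) :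
    AB.depth R R ≠ 0 := by
  classical
  obtain ⟨s, hs⟩ := hfg
  set l := s.toList with hl
  set p : R[X] := ∑ j ∈ Finset.range l.length, Polynomial.C (l.getD j 0) * Polynomial.X ^ j
    with hp
  have hcoeff : ∀ j, j < l.length → p.coeff j = l.getD j 0 := by
    intro j hj
    rw [hp, Polynomial.finset_sum_coeff]
    simp only [Polynomial.coeff_C_mul, Polynomial.coeff_X_pow, mul_ite, mul_one, mul_zero]
    rw [Finset.sum_ite_eq]
    simp [Finset.mem_range.mpr hj]
  have hmemI : ∀ j, l.getD j 0 ∈ I := by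
    intro j
    by_cases hj : j < l.length
    · rw [List.getD_eq_getElem l 0 hj]
      have : l[j] ∈ s := Finset.mem_toList.mp (List.getElem_mem hj)
      exact hs ▸ Submodule.subset_span this
    · rw [List.getD_eq_default l 0 (by omega)]
      exact zero_mem I
  -- McCoy hypothesis
  have hmccoy : ∀ c : R, c • p = 0 → c = 0 := by
    intro c hcp
    refine hann c fun a ha => ?_
    have hker : I ≤ LinearMap.ker (LinearMap.toSpanSingleton R R c) := by
      rw [← hs, Ideal.span_le]
      intro b hb
      rw [SetLike.mem_coe, LinearMap.mem_ker, LinearMap.toSpanSingleton_apply, smul_eq_mul]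
      obtain ⟨j, hj, hbj⟩ : ∃ j, ∃ _ : j < l.length, l.getD j 0 = b := by
        have hbl : b ∈ l := Finset.mem_toList.mpr hb
        obtain ⟨j, hj, hbj⟩ := List.getElem_of_mem hbl
        exact ⟨j, hj, by rw [List.getD_eq_getElem l 0 hj]; exact hbj⟩
      have hc0 : c * l.getD j 0 = 0 := by
        have h2 := congrArg (fun q => Polynomial.coeff q j) hcp
        simpa [Polynomial.coeff_smul, smul_eq_mul, hcoeff j hj] using h2
      rw [← hbj, mul_comm]
      exact hc0
    have := hker ha
    rwa [LinearMap.mem_ker, LinearMap.toSpanSingleton_apply, smul_eq_mul] at this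
  have hpnzd : p ∈ nonZeroDivisors R[X] := Polynomial.mem_nonZeroDivisors_iff.mpr hmccoy
  have hreg : IsSMulRegular R[X] p := by
    intro g₁ g₂ h
    have h2 : (g₁ - g₂) * p = 0 := by
      rw [sub_mul, sub_eq_zero, mul_comm g₁, mul_comm g₂]
      exact h
    exact sub_eq_zero.mp (mem_nonZeroDivisors_iff_right.mp hpnzd _ h2)
  have hIm : I ≤ IsLocalRing.maximalIdeal R := IsLocalRing.le_maximalIdeal hI
  have hpm : p ∈ Ideal.map (algebraMap R R[X]) (IsLocalRing.maximalIdeal R) := by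
    rw [hp]
    refine Ideal.sum_mem _ fun j _ => ?_
    rw [mul_comm, ← Polynomial.algebraMap_eq]
    exact Ideal.mul_mem_left _ _ (Ideal.mem_map_of_mem _ (hIm (hmemI j)))
  -- the faithfully flat extension
  haveI : Module.Free R (Polynomial R) := Module.Free.of_basis (Polynomial.basisMonomials R)
  set E : AB.FFExt R := { S := Polynomial R, faithfullyFlat := inferInstance } with hE
  have hisreg : RingTheory.Sequence.IsRegular (TensorProduct R (Polynomial R) R) [p] := by
    rw [(TensorProduct.AlgebraTensorModule.rid R (Polynomial R) (Polynomial R)).isRegular_congr]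
    refine ⟨(RingTheory.Sequence.isWeaklyRegular_singleton_iff _ _).mpr hreg, ?_⟩
    intro htop
    have h1 : (1 : R[X]) ∈ (Ideal.ofList [p] • ⊤ : Submodule R[X] R[X]) :=
      htop ▸ Submodule.mem_top
    have hle : (Ideal.ofList [p] • ⊤ : Submodule R[X] R[X]) ≤
        (Ideal.map (algebraMap R R[X]) (IsLocalRing.maximalIdeal R) :
          Ideal R[X]) := by
      refine Submodule.smul_le.mpr fun r hr x _ => ?_
      have hrm : r ∈ Ideal.map (algebraMap R R[X]) (IsLocalRing.maximalIdeal R) := by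
        have h3 : Ideal.ofList [p] ≤
            Ideal.map (algebraMap R R[X]) (IsLocalRing.maximalIdeal R) := by
          rw [Ideal.ofList_singleton, Ideal.span_singleton_le_iff_mem]
          exact hpm
        exact h3 hr
      rw [smul_eq_mul]
      exact Ideal.mul_mem_right x _ hrm
    have h1m : (1 : R[X]) ∈ Ideal.map (algebraMap R R[X]) (IsLocalRing.maximalIdeal R) :=
      hle h1
    have hcc : Ideal.map (algebraMap R R[X]) (IsLocalRing.maximalIdeal R) ≤
        (IsLocalRing.maximalIdeal R).comap (Polynomial.constantCoeff (R := R)) := by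
      refine Ideal.map_le_iff_le_comap.mpr fun a ha => ?_
      simpa [Ideal.mem_comap, Polynomial.algebraMap_eq] using ha
    have h1R : (1 : R) ∈ IsLocalRing.maximalIdeal R := by simpa using hcc h1m
    exact (IsLocalRing.maximalIdeal.isMaximal R).ne_top ((Ideal.eq_top_iff_one _).mpr h1R)
  intro hdepth
  have hle1 : (1 : ℕ∞) ≤ AB.depth R R := by
    refine le_trans ?_ (le_iSup (fun E : AB.FFExt R =>
      AB.cdepth E.S (Ideal.map (algebraMap R E.S) (IsLocalRing.maximalIdeal R))
        (TensorProduct R E.S R)) E)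
    have hmeml : ∀ r ∈ [p], r ∈ Ideal.map (algebraMap R E.S) (IsLocalRing.maximalIdeal R) := by
      intro r hr
      rw [List.mem_singleton] at hr
      subst hr
      exact hpm
    exact le_trans (by norm_num) (le_iSup
      (fun rs : {l : List E.S // (∀ r ∈ l, r ∈ Ideal.map (algebraMap R E.S)
        (IsLocalRing.maximalIdeal R)) ∧
        RingTheory.Sequence.IsRegular (TensorProduct R E.S R) l} => (rs.1.length : ℕ∞))
      ⟨[p], hmeml, hisreg⟩)
  rw [hdepth] at hle1
  simp at hle1


theorem eq_zero_iff_dual_eq_zero_of_depth_zero (R : Type u) [CommRing R] [IsLocalRing R]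
    (hdepth : AB.depth R R = 0)
    (M : Type u) [AddCommGroup M] [Module R M] [Module.FinitePresentation R M] :
    (∀ m : M, m = 0) ↔ (∀ f : Module.Dual R M, f = 0) := by
  constructor
  · intro h f
    ext x
    rw [h x, map_zero]; rfl
  · intro hdual x
    by_contra hx
    obtain ⟨I, hfg, hI, hann⟩ := exists_annihilator_ideal R M hdual x hx
    exact depth_ne_zero_of_ideal R I hfg hI hann hdepth
end
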